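/- If (φ_n) is a non-decreasing sequence of nonnegative supermartingale families, each of which is right-continuous in expectation along stopping times (right-CE), then the limit family φ(θ) := lim_n ↑ φ_n(θ) is a right-CE supermartingale family. -/

import Mathlib

/-
The limit is admissible because each `φₙ` is. For the supermartingale inequality one needs a
conditional expectation of `⨆ₙ φₙ(θ)`. Conditional expectations `gₙ` of `φₙ(θ)` are not unique
where integrals are infinite, so they need not increase; but their running maxima
`g₀ ⊔ ⋯ ⊔ gₙ` still have set integrals bounded by those of `φₙ(θ)` (split along
`{gₙ₊₁ < g₀ ⊔ ⋯ ⊔ gₙ}`), so monotone convergence shows that `⨆ₙ gₙ` is a conditional expectation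
of `⨆ₙ φₙ(θ)`, and it lies below `⨆ₙ φₙ(θ')`.
Right continuity in expectation: the supermartingale property bounds `E[φ(θₖ)]` above by
`E[φ(θ)]`, while `E[φ(θₖ)] ≥ E[φₙ(θₖ)] → E[φₙ(θ)]` and `E[φₙ(θ)] ↑ E[φ(θ)]`.
-/

open MeasureTheory Filter Set
open scoped ENNReal

variable {Ω : Type*}

/-- A stopping time of the filtration `F` with values in `[0, T]`. -/
structure StopT {m0 : MeasurableSpace Ω} (F : Filtration ℝ m0) (T : ℝ) where
  t : Ω → ℝ
  isST : IsStoppingTime F (fun ω => (t ω : WithTop ℝ))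
  mem : ∀ ω, t ω ∈ Set.Icc (0 : ℝ) T

variable {m0 : MeasurableSpace Ω} (F : Filtration ℝ m0) (T : ℝ) (μ : Measure Ω)

/-- An admissible family of `[0,∞]`-valued random variables indexed by stopping times. -/
def AdmissibleENN (φ : StopT F T → Ω → ℝ≥0∞) : Prop :=
  (∀ θ : StopT F T, Measurable[θ.isST.measurableSpace] (φ θ)) ∧
  ∀ θ θ' : StopT F T, ∀ᵐ ω ∂μ, θ.t ω = θ'.t ω → φ θ ω = φ θ' ω

/-- `g` is (a version of) the conditional expectation of the nonnegative `f` with respect to `m`,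
characterized by `m`-measurability and equality of the set integrals on `m`-measurable sets. -/
def IsLCondExp (m : MeasurableSpace Ω) (f g : Ω → ℝ≥0∞) : Prop :=
  Measurable[m] g ∧ ∀ s : Set Ω, MeasurableSet[m] s → ∫⁻ ω in s, g ω ∂μ = ∫⁻ ω in s, f ω ∂μ

/-- A nonnegative (`[0,∞]`-valued) supermartingale family:
`E[φ(θ) | F_{θ'}] ≤ φ(θ')` a.s. whenever `θ' ≤ θ` a.s. -/
def SupermartFamENN (φ : StopT F T → Ω → ℝ≥0∞) : Prop :=
  AdmissibleENN F T μ φ ∧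
  ∀ θ θ' : StopT F T, (∀ᵐ ω ∂μ, θ'.t ω ≤ θ.t ω) →
    ∃ g : Ω → ℝ≥0∞, IsLCondExp μ θ'.isST.measurableSpace (φ θ) g ∧ g ≤ᵐ[μ] φ θ'

/-- `θs` is a nonincreasing sequence of stopping times converging to `θ` (θ_n ↓ θ). -/
def DecrTo (θs : ℕ → StopT F T) (θ : StopT F T) : Prop :=
  (∀ n ω, (θs (n + 1)).t ω ≤ (θs n).t ω) ∧ (∀ n ω, θ.t ω ≤ (θs n).t ω) ∧
  ∀ ω, Tendsto (fun n => (θs n).t ω) atTop (nhds (θ.t ω))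

/-- `φ` is right-continuous in expectation along stopping times (`[0,∞]`-valued case). -/
def RightCE_ENN (φ : StopT F T → Ω → ℝ≥0∞) : Prop :=
  ∀ (θ : StopT F T) (θs : ℕ → StopT F T), DecrTo F T θs θ →
    Tendsto (fun n => ∫⁻ ω, φ (θs n) ω ∂μ) atTop (nhds (∫⁻ ω, φ θ ω ∂μ))

open Topology

theorem tendsto_of_le_of_tendsto_minorants {ι κ α : Type*} [CompleteLinearOrder α]
    [TopologicalSpace α] [OrderTopology α] {L : Filter ι} {u : ι → α} {c : α} {v : κ → ι → α}
    {w : κ → α} (hu : ∀ k, u k ≤ c) (hv : ∀ n, Tendsto (v n) L (𝓝 (w n)))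
    (hvu : ∀ n k, v n k ≤ u k) (hc : c ≤ ⨆ n, w n) : Tendsto u L (𝓝 c) := by
  refine tendsto_order.2 ⟨fun a ha => ?_, fun a ha => .of_forall fun k => (hu k).trans_lt ha⟩
  obtain ⟨n, hn⟩ := lt_iSup_iff.1 (ha.trans_le hc)
  exact ((tendsto_order.1 (hv n)).1 a hn).mono fun k hk => hk.trans_le (hvu n k)

section IsLCondExp

variable {μ} {m : MeasurableSpace Ω}

theorem ae_monotone_of_ae_le_succ {β : Type*} [Preorder β] {f : ℕ → Ω → β}
    (hf : ∀ n, f n ≤ᵐ[μ] f (n + 1)) : ∀ᵐ ω ∂μ, Monotone fun n => f n ω :=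
  (ae_all_iff.2 hf).mono fun _ h => monotone_nat_of_le_succ h

theorem measurable_partialSups {g : ℕ → Ω → ℝ≥0∞} (hg : ∀ n, Measurable (g n)) (n : ℕ) :
    Measurable (partialSups g n) := by
  rw [partialSups_eq_sup'_range]
  exact Finset.measurable_range_sup' fun k _ => hg k

theorem IsLCondExp.setLIntegral_partialSups_le (hm : m ≤ m0) {f g : ℕ → Ω → ℝ≥0∞}
    (hf : ∀ n, f n ≤ᵐ[μ] f (n + 1)) (hg : ∀ n, IsLCondExp μ m (f n) (g n)) (n : ℕ) {s : Set Ω}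
    (hs : MeasurableSet[m] s) : ∫⁻ ω in s, partialSups g n ω ∂μ ≤ ∫⁻ ω in s, f n ω ∂μ := by
  induction n generalizing s with
  | zero => exact ((hg 0).2 s hs).le
  | succ k ih =>
    set A : Set Ω := {ω | g (k + 1) ω < partialSups g k ω}
    have hA : MeasurableSet[m] A :=
      measurableSet_lt (hg (k + 1)).1 (measurable_partialSups (fun n => (hg n).1) k)
    have split_along_A : ∀ h : Ω → ℝ≥0∞, ∫⁻ ω in s, h ω ∂μ =
        ∫⁻ ω in A ∩ s, h ω ∂μ + ∫⁻ ω in Aᶜ ∩ s, h ω ∂μ := fun h => by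
      rw [← Measure.restrict_restrict (hm A hA), ← Measure.restrict_restrict (hm A hA).compl,
        lintegral_add_compl _ (hm A hA)]
    have on_A : ∫⁻ ω in A ∩ s, partialSups g (k + 1) ω ∂μ ≤ ∫⁻ ω in A ∩ s, f (k + 1) ω ∂μ := by
      calc ∫⁻ ω in A ∩ s, partialSups g (k + 1) ω ∂μ
          = ∫⁻ ω in A ∩ s, partialSups g k ω ∂μ :=
            setLIntegral_congr_fun (hm _ (hA.inter hs)) fun ω hω => by
              rw [partialSups_add_one, Pi.sup_apply, sup_eq_left]
              exact (hω.1 : g (k + 1) ω < partialSups g k ω).le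
        _ ≤ ∫⁻ ω in A ∩ s, f k ω ∂μ := ih (hA.inter hs)
        _ ≤ ∫⁻ ω in A ∩ s, f (k + 1) ω ∂μ := lintegral_mono_ae (ae_restrict_of_ae (hf k))
    have on_Ac : ∫⁻ ω in Aᶜ ∩ s, partialSups g (k + 1) ω ∂μ = ∫⁻ ω in Aᶜ ∩ s, f (k + 1) ω ∂μ := by
      rw [← (hg (k + 1)).2 _ (hA.compl.inter hs)]
      refine setLIntegral_congr_fun (hm _ (hA.compl.inter hs)) fun ω hω => ?_
      rw [partialSups_add_one, Pi.sup_apply, sup_eq_right]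
      exact le_of_not_gt hω.1
    rw [split_along_A, split_along_A (f (k + 1))]
    exact add_le_add on_A on_Ac.le

theorem IsLCondExp.iSup (hm : m ≤ m0) {f g : ℕ → Ω → ℝ≥0∞} (hf_meas : ∀ n, AEMeasurable (f n) μ)
    (hf : ∀ n, f n ≤ᵐ[μ] f (n + 1)) (hg : ∀ n, IsLCondExp μ m (f n) (g n)) :
    IsLCondExp μ m (fun ω => ⨆ n, f n ω) (fun ω => ⨆ n, g n ω) := by
  have hG : ∀ n, Measurable[m] (partialSups g n) := measurable_partialSups fun n => (hg n).1
  refine ⟨Measurable.iSup fun n => (hg n).1, fun s hs => ?_⟩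
  have sup_eq : ∀ ω, ⨆ n, g n ω = ⨆ n, partialSups g n ω := fun ω => by
    simp only [← iSup_apply, iSup_partialSups_eq]
  simp only [sup_eq]
  rw [lintegral_iSup (fun n => (hG n).mono hm le_rfl) fun _ _ hij => partialSups_monotone g hij,
    lintegral_iSup' (fun n => (hf_meas n).restrict)
      (ae_restrict_of_ae (ae_monotone_of_ae_le_succ hf))]
  refine le_antisymm (iSup_mono fun n => setLIntegral_partialSups_le hm hf hg n hs)
    (iSup_mono fun n => ?_)
  rw [← (hg n).2 s hs]
  exact lintegral_mono fun ω => le_partialSups g n ω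

end IsLCondExp

section Families

variable {F T μ}

theorem AdmissibleENN.measurable {φ : StopT F T → Ω → ℝ≥0∞} (h : AdmissibleENN F T μ φ)
    (θ : StopT F T) : Measurable (φ θ) :=
  (h.1 θ).mono θ.isST.measurableSpace_le le_rfl

theorem AdmissibleENN.iSup {φ : ℕ → StopT F T → Ω → ℝ≥0∞} (h : ∀ n, AdmissibleENN F T μ (φ n)) :
    AdmissibleENN F T μ (fun θ ω => ⨆ n, φ n θ ω) := by
  refine ⟨fun θ => Measurable.iSup fun n => (h n).1 θ, fun θ θ' => ?_⟩
  filter_upwards [ae_all_iff.2 fun n => (h n).2 θ θ'] with ω hω heq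
  exact iSup_congr fun n => hω n heq

theorem SupermartFamENN.iSup {φ : ℕ → StopT F T → Ω → ℝ≥0∞}
    (h : ∀ n, SupermartFamENN F T μ (φ n))
    (hmono : ∀ n (θ : StopT F T), ∀ᵐ ω ∂μ, φ n θ ω ≤ φ (n + 1) θ ω) :
    SupermartFamENN F T μ (fun θ ω => ⨆ n, φ n θ ω) := by
  refine ⟨AdmissibleENN.iSup fun n => (h n).1, fun θ θ' hle => ?_⟩
  choose g hg hg_le using fun n => (h n).2 θ θ' hle
  refine ⟨fun ω => ⨆ n, g n ω, IsLCondExp.iSup θ'.isST.measurableSpace_le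
    (fun n => ((h n).1.measurable θ).aemeasurable)
    (fun n => hmono n θ) hg, ?_⟩
  filter_upwards [ae_all_iff.2 hg_le] with ω hω
  exact iSup_mono hω

theorem SupermartFamENN.lintegral_le {φ : StopT F T → Ω → ℝ≥0∞} (h : SupermartFamENN F T μ φ)
    {θ θ' : StopT F T} (hle : ∀ᵐ ω ∂μ, θ'.t ω ≤ θ.t ω) :
    ∫⁻ ω, φ θ ω ∂μ ≤ ∫⁻ ω, φ θ' ω ∂μ := by
  obtain ⟨g, hg, hg_le⟩ := h.2 θ θ' hle
  calc ∫⁻ ω, φ θ ω ∂μ = ∫⁻ ω, g ω ∂μ := by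
        simpa only [Measure.restrict_univ] using (hg.2 univ MeasurableSet.univ).symm
    _ ≤ ∫⁻ ω, φ θ' ω ∂μ := lintegral_mono_ae hg_le

theorem RightCE_ENN.iSup {φ : ℕ → StopT F T → Ω → ℝ≥0∞} (h : ∀ n, RightCE_ENN F T μ (φ n))
    (hsm : ∀ n, SupermartFamENN F T μ (φ n))
    (hmono : ∀ n (θ : StopT F T), ∀ᵐ ω ∂μ, φ n θ ω ≤ φ (n + 1) θ ω) :
    RightCE_ENN F T μ (fun θ ω => ⨆ n, φ n θ ω) := by
  intro θ θs hθs
  refine tendsto_of_le_of_tendsto_minorants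
    (fun k => (SupermartFamENN.iSup hsm hmono).lintegral_le (ae_of_all _ (hθs.2.1 k)))
    (fun n => h n θ θs hθs)
    (fun n k => lintegral_mono fun ω => le_iSup (fun j => φ j (θs k) ω) n) ?_
  exact (lintegral_iSup' (fun n => ((hsm n).1.measurable θ).aemeasurable)
    (ae_monotone_of_ae_le_succ fun n => hmono n θ)).le

end Families

/-- The increasing limit of a nondecreasing sequence of right-CE nonnegative
supermartingale families is a right-CE supermartingale family. -/
theorem limit_of_nondecreasing_rightCE_supermartingale_families
    (φn : ℕ → StopT F T → Ω → ℝ≥0∞)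
    (hsm : ∀ n, SupermartFamENN F T μ (φn n))
    (hrce : ∀ n, RightCE_ENN F T μ (φn n))
    (hmono : ∀ n (θ : StopT F T), ∀ᵐ ω ∂μ, φn n θ ω ≤ φn (n + 1) θ ω) :
    SupermartFamENN F T μ (fun θ ω => ⨆ n, φn n θ ω) ∧
    RightCE_ENN F T μ (fun θ ω => ⨆ n, φn n θ ω) :=
  ⟨SupermartFamENN.iSup hsm hmono, RightCE_ENN.iSup hrce hsm hmono⟩
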